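/- arXiv:1508.03822 — 2 statements merged into one kernel-verified Lean document; each statement's English description precedes it below -/
import Mathlib

section
/- Let v : [0,∞) → [0,∞) be nonnegative with v(0)=0 and satisfy the upper-Lipschitz condition v(t+s) − v(t) ≤ s for all s,t ≥ 0. If v is continuous, of bounded variation on compacts, and its almost-everywhere derivative vanishes (v'(t) = 0 for Lebesgue-a.e. t), then v is identically zero. -/
open MeasureTheory Set Filter
open scoped NNReal ENNReal

noncomputable section

/-- Canonical path space (renamed to avoid clash). -/
abbrev CPath : Type := ℝ≥0 → ℝ

/-- The canonical filtration on path space, generated by the coordinate maps up to time `t`. -/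
def canonicalFiltration : Filtration ℝ≥0 (inferInstance : MeasurableSpace CPath) where
  seq t := ⨆ s ∈ Set.Iic t, MeasurableSpace.comap (fun ω : CPath => ω s) inferInstance
  mono' := fun s t hst => biSup_mono (fun u hu => le_trans hu hst)
  le' := fun t => iSup₂_le fun s _ => (measurable_pi_apply s).comap_le

/-- Shift operator on path space. -/
def shift (u : ℝ≥0) (ω : CPath) : CPath := fun t => ω (u + t)

/-- The family `P` of laws is strong Markov: for every stopping time `τ`, conditionally on
the pre-`τ` sigma-field, the shifted path has law `P (ω (τ ω))`. -/
def IsStrongMarkovFamily (P : ℝ → Measure CPath) : Prop :=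
  ∀ (x : ℝ) (τ : CPath → ℝ≥0) (hτ : IsStoppingTime canonicalFiltration (fun ω => (τ ω : WithTop ℝ≥0)))
    (A : Set CPath), MeasurableSet A →
    ∀ B : Set CPath, MeasurableSet[hτ.measurableSpace] B →
      P x (B ∩ (fun ω => shift (τ ω) ω) ⁻¹' A) = ∫⁻ ω in B, P (ω (τ ω)) A ∂(P x)

/-- A continuous strong Markov process with state space `E`, given by its family of laws
on canonical path space. -/
structure IsContinuousMarkov (E : Set ℝ) (P : ℝ → Measure CPath) : Prop where
  prob : ∀ x ∈ E, IsProbabilityMeasure (P x)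
  start : ∀ x ∈ E, ∀ᵐ ω ∂(P x), ω 0 = x
  cont : ∀ x ∈ E, ∀ᵐ ω ∂(P x), Continuous ω
  stateSpace : ∀ x ∈ E, ∀ᵐ ω ∂(P x), ∀ t, ω t ∈ E
  strongMarkov : IsStrongMarkovFamily P

/-- A regular continuous strong Markov process: it moreover hits every point of `E`
with positive probability from every starting point in `E`. -/
structure IsRegularDiffusion (E : Set ℝ) (P : ℝ → Measure CPath) extends
    IsContinuousMarkov E P : Prop where
  regular : ∀ x ∈ E, ∀ y ∈ E, 0 < P x {ω : CPath | ∃ t, ω t = y}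

/-- `uFn P x y = 1 ⊓ inf {t : P_x(τ_y ≤ t) > 0}`. -/
def uFn (P : ℝ → Measure CPath) (x y : ℝ) : ℝ≥0∞ :=
  min 1 (sInf {t : ℝ≥0∞ | 0 < P x {ω : CPath | ∃ s : ℝ≥0, (s : ℝ≥0∞) ≤ t ∧ ω s = y}})

/-- `X` is a local martingale for the filtration `F` under `μ`. -/
def IsLocalMart {Ω : Type*} {m : MeasurableSpace Ω} (F : Filtration ℝ≥0 m)
    (μ : Measure Ω) (X : ℝ≥0 → Ω → ℝ) : Prop :=
  ∃ τ : ℕ → Ω → ℝ≥0,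
    (∀ n, IsStoppingTime F (fun ω => (τ n ω : WithTop ℝ≥0))) ∧
    (∀ᵐ ω ∂μ, Tendsto (fun n => τ n ω) atTop atTop) ∧
    ∀ n, Martingale (MeasureTheory.stoppedProcess X (fun ω => (τ n ω : WithTop ℝ≥0))) F μ

/-- `B` is a Brownian motion started at `ξ` under `μ`: continuous paths, Gaussian
increments, independent increments. -/
def IsBM {Ω : Type*} [MeasurableSpace Ω] (μ : Measure Ω) (B : ℝ≥0 → Ω → ℝ) (ξ : ℝ) : Prop :=
  IsProbabilityMeasure μ ∧
  (∀ᵐ ω ∂μ, B 0 ω = ξ ∧ Continuous fun t => B t ω) ∧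
  (∀ s t : ℝ≥0, s ≤ t →
    Measure.map (fun ω => B t ω - B s ω) μ = ProbabilityTheory.gaussianReal 0 (t - s)) ∧
  (∀ (n : ℕ) (t : ℕ → ℝ≥0), Monotone t →
    ProbabilityTheory.iIndepFun (m := fun _ : Fin n => (inferInstance : MeasurableSpace ℝ))
      (fun (i : Fin n) (ω : Ω) => B (t (i.val + 1)) ω - B (t i.val) ω) μ)

end
theorem hits_fast_stmt1 (v : ℝ → ℝ) (hnn : ∀ t : ℝ, 0 ≤ t → 0 ≤ v t) (h0 : v 0 = 0)
    (hlip : ∀ s t : ℝ, 0 ≤ s → 0 ≤ t → v (t + s) - v t ≤ s)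
    (hcont : ContinuousOn v (Set.Ici 0))
    (hbv : ∀ t : ℝ, 0 ≤ t → eVariationOn v (Set.Icc 0 t) < ⊤)
    (hderiv : ∀ᵐ t ∂(volume.restrict (Set.Ici (0:ℝ))), HasDerivAt v 0 t) :
    ∀ t : ℝ, 0 ≤ t → v t = 0 := by

  -- Define `w t = t - v (max t 0)`; it is monotone and continuous, with a.e. derivative 1.
  set w : ℝ → ℝ := fun t => t - v (max t 0) with hw_def
  have hw0 : w 0 = 0 := by simp [hw_def, h0]
  have hw_eq : ∀ t : ℝ, 0 ≤ t → w t = t - v t := fun t ht => by simp [hw_def, max_eq_left ht]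
  have hw_mono : Monotone w := by
    intro s t hst
    rcases le_or_gt 0 s with hs | hs
    · have ht : (0:ℝ) ≤ t := hs.trans hst
      rw [hw_eq s hs, hw_eq t ht]
      have := hlip (t - s) s (by linarith) hs
      have h2 : s + (t - s) = t := by ring
      rw [h2] at this
      linarith
    · rcases le_or_gt 0 t with ht | ht
      · have h1 : w s = s := by simp [hw_def, max_eq_right hs.le, h0]
        have h2 : w t = t - v t := hw_eq t ht
        have h3 : v t ≤ t := by
          have := hlip t 0 ht le_rfl
          simpa [h0] using this
        linarith
      · have h1 : w s = s := by simp [hw_def, max_eq_right hs.le, h0]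
        have h2 : w t = t := by simp [hw_def, max_eq_right ht.le, h0]
        linarith
  have hw_cont : Continuous w := by
    have hmax : Continuous (fun t : ℝ => max t 0) := continuous_id.max continuous_const
    have : Continuous (fun t : ℝ => v (max t 0)) :=
      hcont.comp_continuous hmax (fun x => Set.mem_Ici.mpr (le_max_right _ _))
    exact continuous_id.sub this
  -- The Stieltjes function of `w` is `w` itself.
  have hsf : ∀ x, hw_mono.stieltjesFunction x = w x := by
    intro x
    rw [hw_mono.stieltjesFunction_eq]
    exact rightLim_eq_of_tendsto
      ((hw_cont.tendsto x).mono_left nhdsWithin_le_nhds)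
  set μ := hw_mono.stieltjesFunction.measure with hμ_def
  -- a.e. on `Ioi 0`, the rnDeriv of μ equals 1
  have hderiv' : ∀ᵐ t ∂(volume : Measure ℝ), t ∈ Ici (0:ℝ) → HasDerivAt v 0 t :=
    (ae_restrict_iff' measurableSet_Ici).mp hderiv
  have hrn : ∀ᵐ t ∂(volume : Measure ℝ), t ∈ Ioi (0:ℝ) →
      μ.rnDeriv volume t = 1 := by
    filter_upwards [hw_mono.ae_hasDerivAt, hderiv', Measure.rnDeriv_lt_top μ volume]
      with t h1 h2 h3 ht
    have hvt : HasDerivAt v 0 t := h2 (Set.mem_Ici.mpr (le_of_lt ht))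
    have hwt : HasDerivAt w 1 t := by
      have h4 : HasDerivAt (fun u : ℝ => u - v u) 1 t := by
        simpa using (hasDerivAt_id' t).fun_sub hvt
      apply h4.congr_of_eventuallyEq
      filter_upwards [Ioi_mem_nhds ht] with u hu
      exact hw_eq u (le_of_lt hu)
    have h5 : (μ.rnDeriv volume t).toReal = 1 := (hwt.unique h1).symm
    have h6 : μ.rnDeriv volume t ≠ ⊤ := h3.ne
    rw [← ENNReal.ofReal_toReal h6, h5]
    simp
  -- conclude
  intro t ht
  have key : ENNReal.ofReal t ≤ μ (Ioc 0 t) := by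
    have h1 : volume.withDensity (μ.rnDeriv volume) ≤ μ := Measure.withDensity_rnDeriv_le μ volume
    have h2 : volume.withDensity (μ.rnDeriv volume) (Ioc 0 t) = ENNReal.ofReal t := by
      rw [withDensity_apply _ measurableSet_Ioc]
      rw [setLIntegral_congr_fun_ae measurableSet_Ioc
        (hrn.mono fun x hx hx' => hx hx'.1)]
      simp [Real.volume_Ioc, ht]
    rw [← h2]
    exact h1 _
  rw [StieltjesFunction.measure_Ioc] at key
  have hwle : w 0 ≤ w t := hw_mono ht
  rw [hsf, hsf, hw0, sub_zero] at key
  have : t ≤ w t := by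
    rw [hw0] at hwle
    exact (ENNReal.ofReal_le_ofReal_iff hwle).mp key
  rw [hw_eq t ht] at this
  have := hnn t ht
  linarith
end

section
/- Let X be a one-dimensional continuous strong Markov process on E and for w ∈ E define u_w(y) = 1 ∧ inf{t ≥ 0 : P_w(τ_y ≤ t) > 0}. Then for each w ∈ E and t ≥ 0, P_w(u_w(X_t) ≤ t) = 1. -/
open MeasureTheory Set Filter
open scoped NNReal ENNReal

theorem hits_fast_stmt12 (E : Set ℝ) (hEopen : IsOpen E) (hEconn : E.OrdConnected)
    (P : ℝ → Measure CPath) (hX : IsContinuousMarkov E P) :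
    ∀ w ∈ E, ∀ t : ℝ≥0, P w {ω : CPath | uFn P w (ω t) ≤ (t : ℝ≥0∞)} = 1 := by

  intro w hw t
  haveI : IsProbabilityMeasure (P w) := hX.prob w hw
  set g : ℝ → ℝ≥0∞ := fun y =>
    P w {ω : CPath | ∃ s : ℝ≥0, (s : ℝ≥0∞) ≤ (t : ℝ≥0∞) ∧ ω s = y} with hg
  -- Key: a.e. path starts at w and is continuous, hence hits (by IVT)
  -- every point between w and any value it takes by time t.
  have key : ∀ c : ℝ, ∀ᵐ ω ∂(P w), ∀ s : ℝ≥0, (s : ℝ≥0∞) ≤ (t : ℝ≥0∞) →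
      ((w ≤ c ∧ c ≤ ω s) ∨ (ω s ≤ c ∧ c ≤ w)) →
      ∃ r : ℝ≥0, (r : ℝ≥0∞) ≤ (t : ℝ≥0∞) ∧ ω r = c := by
    intro c
    filter_upwards [hX.start w hw, hX.cont w hw] with ω h0 hc s hs hcc
    rcases hcc with ⟨h1, h2⟩ | ⟨h1, h2⟩
    · obtain ⟨r, hr, hre⟩ := intermediate_value_Icc (zero_le : 0 ≤ s)
        hc.continuousOn ⟨by rw [h0]; exact h1, h2⟩
      exact ⟨r, le_trans (by exact_mod_cast hr.2) hs, hre⟩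
    · obtain ⟨r, hr, hre⟩ := intermediate_value_Icc' (zero_le : 0 ≤ s)
        hc.continuousOn ⟨h1, by rw [h0]; exact h2⟩
      exact ⟨r, le_trans (by exact_mod_cast hr.2) hs, hre⟩
  have upnull : P w {ω : CPath | w ≤ ω t ∧ g (ω t) = 0} = 0 := by
    by_cases hB : {y : ℝ | w ≤ y ∧ g y = 0}.Nonempty
    · set B := {y : ℝ | w ≤ y ∧ g y = 0} with hBdef
      have hbdd : BddBelow B := ⟨w, fun y hy => hy.1⟩
      set b := sInf B with hbdef
      have hgt : P w {ω : CPath | b < ω t} = 0 := by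
        have hsub : {ω : CPath | b < ω t} ⊆
            ⋃ q : ℚ, {ω : CPath | b < (q : ℝ) ∧ (q : ℝ) ≤ ω t} := by
          intro ω hω
          obtain ⟨q, hq1, hq2⟩ := exists_rat_btwn (show b < ω t from hω)
          exact mem_iUnion.2 ⟨q, hq1, hq2.le⟩
        refine measure_mono_null hsub (measure_iUnion_null fun q => ?_)
        by_cases hq : b < (q : ℝ)
        · obtain ⟨y0, hy0B, hy0lt⟩ := exists_lt_of_csInf_lt hB hq
          have hle : P w {ω : CPath | b < (q : ℝ) ∧ (q : ℝ) ≤ ω t} ≤ g y0 := by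
            apply measure_mono_ae
            filter_upwards [key y0] with ω hk hmem
            exact hk t le_rfl (Or.inl ⟨hy0B.1, le_trans hy0lt.le hmem.2⟩)
          exact le_antisymm (hle.trans_eq hy0B.2) zero_le
        · have : {ω : CPath | b < (q : ℝ) ∧ (q : ℝ) ≤ ω t} = ∅ :=
            eq_empty_of_forall_notMem fun ω hω => hq hω.1
          simp [this]
      have hgb : P w {ω : CPath | ω t = b ∧ g b = 0} = 0 := by
        by_cases h : g b = 0
        · have hsub : {ω : CPath | ω t = b ∧ g b = 0} ⊆
              {ω : CPath | ∃ s : ℝ≥0, (s : ℝ≥0∞) ≤ (t : ℝ≥0∞) ∧ ω s = b} :=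
            fun ω hω => ⟨t, le_rfl, hω.1⟩
          exact le_antisymm ((measure_mono hsub).trans_eq h) zero_le
        · have : {ω : CPath | ω t = b ∧ g b = 0} = ∅ :=
            eq_empty_of_forall_notMem fun ω hω => h hω.2
          simp [this]
      have hsub : {ω : CPath | w ≤ ω t ∧ g (ω t) = 0} ⊆
          {ω : CPath | b < ω t} ∪ {ω : CPath | ω t = b ∧ g b = 0} := by
        rintro ω ⟨h1, h2⟩
        have hmem : ω t ∈ B := ⟨h1, h2⟩
        rcases lt_or_eq_of_le (csInf_le hbdd hmem) with h | h
        · exact Or.inl h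
        · exact Or.inr ⟨h.symm, show g (sInf B) = 0 by rw [h]; exact h2⟩
      exact measure_mono_null hsub (measure_union_null hgt hgb)
    · have : {ω : CPath | w ≤ ω t ∧ g (ω t) = 0} = ∅ :=
        eq_empty_of_forall_notMem fun ω hω => hB ⟨ω t, hω⟩
      simp [this]
  have downnull : P w {ω : CPath | ω t ≤ w ∧ g (ω t) = 0} = 0 := by
    by_cases hB : {y : ℝ | y ≤ w ∧ g y = 0}.Nonempty
    · set B := {y : ℝ | y ≤ w ∧ g y = 0} with hBdef
      have hbdd : BddAbove B := ⟨w, fun y hy => hy.1⟩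
      set b := sSup B with hbdef
      have hgt : P w {ω : CPath | ω t < b} = 0 := by
        have hsub : {ω : CPath | ω t < b} ⊆
            ⋃ q : ℚ, {ω : CPath | (q : ℝ) < b ∧ ω t ≤ (q : ℝ)} := by
          intro ω hω
          obtain ⟨q, hq1, hq2⟩ := exists_rat_btwn (show ω t < b from hω)
          exact mem_iUnion.2 ⟨q, hq2, hq1.le⟩
        refine measure_mono_null hsub (measure_iUnion_null fun q => ?_)
        by_cases hq : (q : ℝ) < b
        · obtain ⟨y0, hy0B, hy0lt⟩ := exists_lt_of_lt_csSup hB hq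
          have hle : P w {ω : CPath | (q : ℝ) < b ∧ ω t ≤ (q : ℝ)} ≤ g y0 := by
            apply measure_mono_ae
            filter_upwards [key y0] with ω hk hmem
            exact hk t le_rfl (Or.inr ⟨le_trans hmem.2 hy0lt.le, hy0B.1⟩)
          exact le_antisymm (hle.trans_eq hy0B.2) zero_le
        · have : {ω : CPath | (q : ℝ) < b ∧ ω t ≤ (q : ℝ)} = ∅ :=
            eq_empty_of_forall_notMem fun ω hω => hq hω.1
          simp [this]
      have hgb : P w {ω : CPath | ω t = b ∧ g b = 0} = 0 := by
        by_cases h : g b = 0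
        · have hsub : {ω : CPath | ω t = b ∧ g b = 0} ⊆
              {ω : CPath | ∃ s : ℝ≥0, (s : ℝ≥0∞) ≤ (t : ℝ≥0∞) ∧ ω s = b} :=
            fun ω hω => ⟨t, le_rfl, hω.1⟩
          exact le_antisymm ((measure_mono hsub).trans_eq h) zero_le
        · have : {ω : CPath | ω t = b ∧ g b = 0} = ∅ :=
            eq_empty_of_forall_notMem fun ω hω => h hω.2
          simp [this]
      have hsub : {ω : CPath | ω t ≤ w ∧ g (ω t) = 0} ⊆
          {ω : CPath | ω t < b} ∪ {ω : CPath | ω t = b ∧ g b = 0} := by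
        rintro ω ⟨h1, h2⟩
        have hmem : ω t ∈ B := ⟨h1, h2⟩
        rcases lt_or_eq_of_le (le_csSup hbdd hmem) with h | h
        · exact Or.inl h
        · exact Or.inr ⟨h, show g (sSup B) = 0 by rw [← h]; exact h2⟩
      exact measure_mono_null hsub (measure_union_null hgt hgb)
    · have : {ω : CPath | ω t ≤ w ∧ g (ω t) = 0} = ∅ :=
        eq_empty_of_forall_notMem fun ω hω => hB ⟨ω t, hω⟩
      simp [this]
  have main : P w {ω : CPath | ¬ uFn P w (ω t) ≤ (t : ℝ≥0∞)} = 0 := by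
    refine measure_mono_null ?_ (measure_union_null upnull downnull)
    intro ω hω
    have hg0 : g (ω t) = 0 := by
      by_contra hne
      apply hω
      have hmem : (t : ℝ≥0∞) ∈ {t' : ℝ≥0∞ |
          0 < P w {ω' : CPath | ∃ s : ℝ≥0, (s : ℝ≥0∞) ≤ t' ∧ ω' s = ω t}} :=
        pos_iff_ne_zero.mpr hne
      calc uFn P w (ω t) ≤ sInf {t' : ℝ≥0∞ |
            0 < P w {ω' : CPath | ∃ s : ℝ≥0, (s : ℝ≥0∞) ≤ t' ∧ ω' s = ω t}} :=
          min_le_right _ _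
        _ ≤ (t : ℝ≥0∞) := sInf_le hmem
    rcases le_total w (ω t) with h | h
    · exact Or.inl ⟨h, hg0⟩
    · exact Or.inr ⟨h, hg0⟩
  refine le_antisymm prob_le_one ?_
  calc (1 : ℝ≥0∞) = P w univ := (measure_univ).symm
    _ ≤ P w ({ω : CPath | uFn P w (ω t) ≤ (t : ℝ≥0∞)} ∪
          {ω : CPath | ¬ uFn P w (ω t) ≤ (t : ℝ≥0∞)}) :=
        measure_mono fun ω _ => (em _).imp id id
    _ ≤ P w {ω : CPath | uFn P w (ω t) ≤ (t : ℝ≥0∞)}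
        + P w {ω : CPath | ¬ uFn P w (ω t) ≤ (t : ℝ≥0∞)} := measure_union_le _ _
    _ = P w {ω : CPath | uFn P w (ω t) ≤ (t : ℝ≥0∞)} := by rw [main, add_zero]
end
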